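/- For all closed session types T and U: T ≼ U if and only if U ⊨ F(T, ⊕), where ≼ denotes the subtyping relation ≤_⊕. -/
import Mathlib


namespace SessionCF

/-- Polarity of an action: `send` is `!`, `recv` is `?`.  Also used for the
choice constructors: `send` is the internal choice `⊕`, `recv` the external
choice `&`. -/
inductive Pol : Type
  | send
  | recv
  deriving DecidableEq, Repr

/-- The dual polarity / constructor. -/
def Pol.dual : Pol → Pol
  | .send => .recv
  | .recv => .send

/-- Actions `!a` and `?a` over the alphabet `A`. -/
abbrev Act (A : Type) := Pol × A

/-- Session types (de Bruijn representation of recursion variables).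
An internal choice `⊕_{i∈I} !a_i.T_i` is `choice .send I br`; an external
choice `&_{i∈I} ?a_i.T_i` is `choice .recv I br`, where `br a` is the
continuation after message `a` (only relevant for `a ∈ I`). -/
inductive SType (A : Type) : Type
  | end_ : SType A
  | choice : Pol → Finset A → (A → SType A) → SType A
  | mu : SType A → SType A
  | var : ℕ → SType A

namespace SType

variable {A : Type}

/-- Lifting of a renaming under a binder. -/
def liftR (f : ℕ → ℕ) : ℕ → ℕ
  | 0 => 0
  | n + 1 => f n + 1

/-- Renaming of free type variables. -/
def rename : SType A → (ℕ → ℕ) → SType A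
  | .end_, _ => .end_
  | .choice p d br, f => .choice p d (fun a => (br a).rename f)
  | .mu T, f => .mu (T.rename (liftR f))
  | .var n, f => .var (f n)

/-- Lifting of a (parallel, capture-avoiding) substitution under a binder. -/
def liftS (σ : ℕ → SType A) : ℕ → SType A
  | 0 => .var 0
  | n + 1 => (σ n).rename Nat.succ

/-- Parallel capture-avoiding substitution. -/
def subst : SType A → (ℕ → SType A) → SType A
  | .end_, _ => .end_
  | .choice p d br, σ => .choice p d (fun a => (br a).subst σ)
  | .mu T, σ => .mu (T.subst (liftS σ))
  | .var n, σ => σ n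

/-- Capture-avoiding substitution `T[U/x]` of `U` for the free variable `x`. -/
def substVar (T : SType A) (x : ℕ) (U : SType A) : SType A :=
  T.subst (fun n => if n = x then U else .var n)

/-- `cons` of a type onto a substitution. -/
def consS (U : SType A) (σ : ℕ → SType A) : ℕ → SType A
  | 0 => U
  | n + 1 => σ n

/-- The unfolding `T[rec x.T / x]` of the body of `rec x.T`. -/
def unfold (T : SType A) : SType A :=
  T.subst (consS (.mu T) .var)

/-- All free variables are `< k`. -/
def closedUnder : SType A → ℕ → Prop
  | .end_, _ => True
  | .choice _ d br, k => ∀ a ∈ d, (br a).closedUnder k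
  | .mu T, k => T.closedUnder (k + 1)
  | .var n, k => n < k

/-- A closed session type (no free variables). -/
def closed (T : SType A) : Prop := T.closedUnder 0

/-- Variable `x` only occurs guarded (under a choice prefix). -/
def guardedVar : SType A → ℕ → Prop
  | .end_, _ => True
  | .choice _ _ _, _ => True
  | .mu T, x => T.guardedVar (x + 1)
  | .var m, x => m ≠ x

/-- Well-formed session types: contractive (every recursion variable is
guarded) and every choice has a nonempty, finite index set. -/
def wf : SType A → Prop
  | .end_ => True
  | .choice _ d br => d.Nonempty ∧ ∀ a ∈ d, (br a).wf
  | .mu T => T.wf ∧ T.guardedVar 0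
  | .var _ => True

/-- The dual session type: swaps `⊕` with `&` and `!` with `?`. -/
def dual : SType A → SType A
  | .end_ => .end_
  | .choice p d br => .choice p.dual d (fun a => (br a).dual)
  | .mu T => .mu T.dual
  | .var n => .var n

end SType

/-- The labelled transition system on session types. -/
inductive Step {A : Type} : SType A → Act A → SType A → Prop
  | choice {p : Pol} {d : Finset A} {br : A → SType A} {a : A} (h : a ∈ d) :
      Step (.choice p d br) (p, a) (br a)
  | unf {T : SType A} {α : Act A} {T' : SType A} :
      Step T.unfold α T' → Step (.mu T) α T'

/-- Modal μ-calculus formulae (greatest-fixpoint fragment), de Bruijn. -/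
inductive Formula (A : Type) : Type
  | tt : Formula A
  | ff : Formula A
  | and : Formula A → Formula A → Formula A
  | or : Formula A → Formula A → Formula A
  | box : Act A → Formula A → Formula A
  | dia : Act A → Formula A → Formula A
  | nu : Formula A → Formula A
  | var : ℕ → Formula A

namespace Formula

variable {A : Type}

/-- Renaming of free formula variables. -/
def rename : Formula A → (ℕ → ℕ) → Formula A
  | .tt, _ => .tt
  | .ff, _ => .ff
  | .and φ ψ, f => .and (φ.rename f) (ψ.rename f)
  | .or φ ψ, f => .or (φ.rename f) (ψ.rename f)
  | .box α φ, f => .box α (φ.rename f)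
  | .dia α φ, f => .dia α (φ.rename f)
  | .nu φ, f => .nu (φ.rename (SType.liftR f))
  | .var n, f => .var (f n)

/-- Lifting of a substitution under a `ν` binder. -/
def liftF (τ : ℕ → Formula A) : ℕ → Formula A
  | 0 => .var 0
  | n + 1 => (τ n).rename Nat.succ

/-- Parallel capture-avoiding substitution on formulae. -/
def subst : Formula A → (ℕ → Formula A) → Formula A
  | .tt, _ => .tt
  | .ff, _ => .ff
  | .and φ ψ, τ => .and (φ.subst τ) (ψ.subst τ)
  | .or φ ψ, τ => .or (φ.subst τ) (ψ.subst τ)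
  | .box α φ, τ => .box α (φ.subst τ)
  | .dia α φ, τ => .dia α (φ.subst τ)
  | .nu φ, τ => .nu (φ.subst (liftF τ))
  | .var n, τ => τ n

/-- Capture-avoiding substitution `φ[ψ/x]` for the free variable `x`. -/
def substVar (φ : Formula A) (x : ℕ) (ψ : Formula A) : Formula A :=
  φ.subst (fun n => if n = x then ψ else .var n)

/-- `cons` of a formula onto a substitution. -/
def consF (ψ : Formula A) (τ : ℕ → Formula A) : ℕ → Formula A
  | 0 => ψ
  | n + 1 => τ n

/-- Instantiation `φ[ψ/x]` of the variable bound by the enclosing binder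
(de Bruijn index `0`). -/
def inst (φ ψ : Formula A) : Formula A :=
  φ.subst (consF ψ .var)

/-- The `n`-th approximation `(νx.φ)ⁿ` of the fixpoint `νx.φ`, where `φ` is
the body:  `(νx.φ)⁰ = true` and `(νx.φ)ⁿ⁺¹ = φ[(νx.φ)ⁿ/x]`. -/
def nuApprox (φ : Formula A) : ℕ → Formula A
  | 0 => .tt
  | n + 1 => φ.inst (φ.nuApprox n)

/-- All free formula variables are `< k`. -/
def closedUnder : Formula A → ℕ → Prop
  | .tt, _ => True
  | .ff, _ => True
  | .and φ ψ, k => φ.closedUnder k ∧ ψ.closedUnder k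
  | .or φ ψ, k => φ.closedUnder k ∧ ψ.closedUnder k
  | .box _ φ, k => φ.closedUnder k
  | .dia _ φ, k => φ.closedUnder k
  | .nu φ, k => φ.closedUnder (k + 1)
  | .var n, k => n < k

/-- A closed formula. -/
def closed (φ : Formula A) : Prop := φ.closedUnder 0

/-- Variable `x` only occurs guarded (under a modality). -/
def guardedVar : Formula A → ℕ → Prop
  | .tt, _ => True
  | .ff, _ => True
  | .and φ ψ, x => φ.guardedVar x ∧ ψ.guardedVar x
  | .or φ ψ, x => φ.guardedVar x ∧ ψ.guardedVar x
  | .box _ _, _ => True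
  | .dia _ _, _ => True
  | .nu φ, x => φ.guardedVar (x + 1)
  | .var m, x => m ≠ x

/-- Contractive (well-formed) formulae. -/
def wf : Formula A → Prop
  | .tt => True
  | .ff => True
  | .and φ ψ => φ.wf ∧ ψ.wf
  | .or φ ψ => φ.wf ∧ ψ.wf
  | .box _ φ => φ.wf
  | .dia _ φ => φ.wf
  | .nu φ => φ.wf ∧ φ.guardedVar 0
  | .var _ => True

/-- The dual formula: swaps `!` and `?` in all modalities. -/
def dual : Formula A → Formula A
  | .tt => .tt
  | .ff => .ff
  | .and φ ψ => .and φ.dual ψ.dual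
  | .or φ ψ => .or φ.dual ψ.dual
  | .box (p, a) φ => .box (p.dual, a) φ.dual
  | .dia (p, a) φ => .dia (p.dual, a) φ.dual
  | .nu φ => .nu φ.dual
  | .var n => .var n

end Formula

/-- The satisfaction relation `T ⊨ φ` between session types and formulae,
defined inductively; `T ⊨ νx.φ` iff `T ⊨ (νx.φ)ⁿ` for all `n`. -/
inductive Sat {A : Type} : SType A → Formula A → Prop
  | tt {T : SType A} : Sat T .tt
  | and {T : SType A} {φ ψ : Formula A} : Sat T φ → Sat T ψ → Sat T (.and φ ψ)
  | orl {T : SType A} {φ ψ : Formula A} : Sat T φ → Sat T (.or φ ψ)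
  | orr {T : SType A} {φ ψ : Formula A} : Sat T ψ → Sat T (.or φ ψ)
  | box {T : SType A} {α : Act A} {φ : Formula A} :
      (∀ T', Step T α T' → Sat T' φ) → Sat T (.box α φ)
  | dia {T T' : SType A} {α : Act A} {φ : Formula A} :
      Step T α T' → Sat T' φ → Sat T (.dia α φ)
  | nu {T : SType A} {φ : Formula A} :
      (∀ n, Sat T (φ.nuApprox n)) → Sat T (.nu φ)

/-- One step of the subtyping rules (for parameter `s ∈ {⊕, &}`), including
the equi-recursive identifications of `rec x.T` with its unfolding. -/
def SubStep {A : Type} (s : Pol) (R : SType A → SType A → Prop)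
    (T U : SType A) : Prop :=
  (T = .end_ ∧ U = .end_)
  ∨ (∃ (dT : Finset A) (brT : A → SType A) (dU : Finset A) (brU : A → SType A),
      T = .choice s dT brT ∧ U = .choice s dU brU ∧ dT ⊆ dU ∧
        ∀ a ∈ dT, R (brT a) (brU a))
  ∨ (∃ (dT : Finset A) (brT : A → SType A) (dU : Finset A) (brU : A → SType A),
      T = .choice s.dual dT brT ∧ U = .choice s.dual dU brU ∧ dU ⊆ dT ∧
        ∀ a ∈ dU, R (brT a) (brU a))
  ∨ (∃ T₀, T = .mu T₀ ∧ R T₀.unfold U)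
  ∨ (∃ U₀, U = .mu U₀ ∧ R T U₀.unfold)

/-- The subtyping relation `≤_s`: the largest relation closed under the
(coinductively interpreted, equi-recursive) subtyping rules. -/
def Subtype {A : Type} (s : Pol) (T U : SType A) : Prop :=
  ∃ R : SType A → SType A → Prop,
    (∀ T U, R T U → SubStep s R T U) ∧ R T U

section CharFormula

variable {A : Type} [Fintype A] [LinearOrder A]

/-- Big conjunction of a list of formulae. -/
def bigAnd : List (Formula A) → Formula A
  | [] => .tt
  | φ :: rest => .and φ (bigAnd rest)

/-- Big disjunction of a list of formulae. -/
def bigOr : List (Formula A) → Formula A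
  | [] => .ff
  | φ :: rest => .or φ (bigOr rest)

/-- The (canonically ordered) list of all actions `𝒜 = {!a, ?a : a ∈ 𝔸}`. -/
def allActs (A : Type) [Fintype A] [LinearOrder A] : List (Act A) :=
  ((Finset.univ : Finset A).sort (· ≤ ·)).map (fun a => (Pol.send, a)) ++
    ((Finset.univ : Finset A).sort (· ≤ ·)).map (fun a => (Pol.recv, a))

/-- The characteristic formula `F(T, s)` of a session type `T` on the
constructor `s ∈ {⊕, &}`. -/
def charF : SType A → Pol → Formula A
  | .end_, _ => bigAnd ((allActs A).map (fun α => .box α .ff))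
  | .var n, _ => .var n
  | .mu T, s => .nu (charF T s)
  | .choice p d br, s =>
      if p = s then
        bigAnd ((d.sort (· ≤ ·)).map (fun a => .dia (p, a) (charF (br a) s)))
      else
        .and
          (bigAnd ((d.sort (· ≤ ·)).map (fun a => .box (p, a) (charF (br a) s))))
          (.and
            (bigOr ((d.sort (· ≤ ·)).map (fun a => Formula.dia (p, a) .tt)))
            (bigAnd (((allActs A).filter
                (fun α => ¬ (α.1 = p ∧ α.2 ∈ d))).map (fun α => .box α .ff))))

end CharFormula

/-- Synchronous semantics of a system of two session types. -/
inductive SysStep {A : Type} : SType A × SType A → SType A × SType A → Prop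
  | comm {T T' U U' : SType A} {p : Pol} {a : A} :
      Step T (p, a) T' → Step U (p.dual, a) U' → SysStep (T, U) (T', U')

/-- `T` is a choice with constructor `p`. -/
def isChoice {A : Type} (p : Pol) (T : SType A) : Prop :=
  ∃ (d : Finset A) (br : A → SType A), T = SType.choice p d br

/-- Error systems. -/
def Error {A : Type} (T U : SType A) : Prop :=
  (∃ p, isChoice p T ∧ isChoice p U)
  ∨ (∃ (dT : Finset A) (brT : A → SType A) (dU : Finset A) (brU : A → SType A),
      T = .choice .send dT brT ∧ U = .choice .recv dU brU ∧ ∃ a ∈ dT, a ∉ dU)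
  ∨ (∃ (dT : Finset A) (brT : A → SType A) (dU : Finset A) (brU : A → SType A),
      U = .choice .send dU brU ∧ T = .choice .recv dT brT ∧ ∃ a ∈ dU, a ∉ dT)
  ∨ (T = .end_ ∧ ∃ p, isChoice p U)
  ∨ (U = .end_ ∧ ∃ p, isChoice p T)

/-- A system is safe if no reachable system is an error. -/
def Safe {A : Type} (T U : SType A) : Prop :=
  ∀ S' : SType A × SType A,
    Relation.ReflTransGen SysStep (T, U) S' → ¬ Error S'.1 S'.2

/-- A substitution is closed when all its components are closed types. -/
def closedSubst {A : Type} (σ : ℕ → SType A) : Prop :=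
  ∀ n, (σ n).closed

/-- Extended subtyping: all closed instantiations of the free variables are
related by `≤_s`. -/
def ExtSub {A : Type} (s : Pol) (T U : SType A) : Prop :=
  ∀ σ : ℕ → SType A, closedSubst σ → Subtype s (T.subst σ) (U.subst σ)

/-- The `k`-limited subtyping derivations on closed types (equi-recursive:
recursion may be unfolded freely at the same level; premises are at level
`k - 1`; everything holds at level `0`). -/
inductive SubK {A : Type} (s : Pol) : ℕ → SType A → SType A → Prop
  | zero {T U : SType A} : SubK s 0 T U
  | end_ {k : ℕ} : SubK s (k + 1) .end_ .end_
  | ch {k : ℕ} {dT : Finset A} {brT : A → SType A} {dU : Finset A}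
      {brU : A → SType A} :
      dT ⊆ dU → (∀ a ∈ dT, SubK s k (brT a) (brU a)) →
      SubK s (k + 1) (.choice s dT brT) (.choice s dU brU)
  | coch {k : ℕ} {dT : Finset A} {brT : A → SType A} {dU : Finset A}
      {brU : A → SType A} :
      dU ⊆ dT → (∀ a ∈ dU, SubK s k (brT a) (brU a)) →
      SubK s (k + 1) (.choice s.dual dT brT) (.choice s.dual dU brU)
  | recL {k : ℕ} {T U : SType A} :
      SubK s (k + 1) T.unfold U → SubK s (k + 1) (.mu T) U
  | recR {k : ℕ} {T U : SType A} :
      SubK s (k + 1) T U.unfold → SubK s (k + 1) T (.mu U)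

/-- The extended `k`-limited subtyping `≤_{s,e,k}`. -/
def ExtSubK {A : Type} (s : Pol) (k : ℕ) (T U : SType A) : Prop :=
  ∀ σ : ℕ → SType A, closedSubst σ → SubK s k (T.subst σ) (U.subst σ)

/-- Extended satisfaction `T ⊨_e φ`: every closed instantiation of the type
by types `V_i` and of the formula by closed formulae `ψ_i` with `V_i ⊨ ψ_i`
(at the same variable) satisfies the instantiated formula. -/
def SatE {A : Type} (T : SType A) (φ : Formula A) : Prop :=
  ∀ (σ : ℕ → SType A) (τ : ℕ → Formula A),
    closedSubst σ → (∀ n, (τ n).closed) → (∀ n, Sat (σ n) (τ n)) →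
    Sat (T.subst σ) (φ.subst τ)

/-- The `k`-limited extended satisfaction relation `⊨_{e,k}`. -/
inductive SatK {A : Type} : ℕ → SType A → Formula A → Prop
  | zero {T : SType A} {φ : Formula A} : SatK 0 T φ
  | tt {k : ℕ} {T : SType A} : SatK (k + 1) T .tt
  | and {k : ℕ} {T : SType A} {φ ψ : Formula A} :
      SatK (k + 1) T φ → SatK (k + 1) T ψ → SatK (k + 1) T (.and φ ψ)
  | orl {k : ℕ} {T : SType A} {φ ψ : Formula A} :
      SatK (k + 1) T φ → SatK (k + 1) T (.or φ ψ)
  | orr {k : ℕ} {T : SType A} {φ ψ : Formula A} :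
      SatK (k + 1) T ψ → SatK (k + 1) T (.or φ ψ)
  | box {k : ℕ} {T : SType A} {α : Act A} {φ : Formula A} :
      (∀ σ : ℕ → SType A, closedSubst σ →
        ∀ T', Step (T.subst σ) α T' → SatK k T' φ) →
      SatK (k + 1) T (.box α φ)
  | dia {k : ℕ} {T : SType A} {α : Act A} {φ : Formula A}
      (W : ∀ σ : ℕ → SType A, closedSubst σ → SType A) :
      (∀ (σ : ℕ → SType A) (h : closedSubst σ), Step (T.subst σ) α (W σ h)) →
      (∀ (σ : ℕ → SType A) (h : closedSubst σ), SatK k (W σ h) φ) →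
      SatK (k + 1) T (.dia α φ)
  | nu {k : ℕ} {T : SType A} {φ : Formula A} :
      (∀ n, SatK (k + 1) T (φ.nuApprox n)) → SatK (k + 1) T (.nu φ)

/-- Type constructors `ℭ`: `end`, `⊕A` and `&A`. -/
inductive Ctor (A : Type) : Type
  | end_ : Ctor A
  | choice : Pol → Finset A → Ctor A

/-- The labelling of the term automaton `𝒜(T)`: the constructor of (the
unfolding of) a session type. -/
inductive HasCtor {A : Type} : SType A → Ctor A → Prop
  | end_ : HasCtor .end_ .end_
  | choice {p : Pol} {d : Finset A} {br : A → SType A} :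
      HasCtor (.choice p d br) (.choice p d)
  | unf {T : SType A} {c : Ctor A} : HasCtor T.unfold c → HasCtor (.mu T) c

/-- The order `⊑` on type constructors. -/
def CtorLe {A : Type} : Ctor A → Ctor A → Prop
  | .end_, .end_ => True
  | .choice .send d₁, .choice .send d₂ => d₁ ⊆ d₂
  | .choice .recv d₁, .choice .recv d₂ => d₂ ⊆ d₁
  | _, _ => False

/-- Transitions of the product automaton `𝒜(T) × 𝒜(U)`: a common action. -/
def ProdStep {A : Type} (S S' : SType A × SType A) : Prop :=
  ∃ α : Act A, Step S.1 α S'.1 ∧ Step S.2 α S'.2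


/-! ### Auxiliary development -/

section Dev

variable {A : Type}

namespace SType

lemma liftR_comp (f g : ℕ → ℕ) : (liftR g) ∘ (liftR f) = liftR (g ∘ f) := by
  funext n; cases n <;> rfl

lemma rename_rename (T : SType A) (f g : ℕ → ℕ) :
    (T.rename f).rename g = T.rename (g ∘ f) := by
  induction T generalizing f g with
  | end_ => rfl
  | choice p d br ih => simp [rename, ih]
  | mu T ih => simp [rename, ih, liftR_comp]
  | var n => rfl

lemma liftS_liftR (σ : ℕ → SType A) (f : ℕ → ℕ) :
    (liftS σ) ∘ (liftR f) = liftS (σ ∘ f) := by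
  funext n; cases n <;> rfl

lemma subst_rename (T : SType A) (f : ℕ → ℕ) (σ : ℕ → SType A) :
    (T.rename f).subst σ = T.subst (σ ∘ f) := by
  induction T generalizing f σ with
  | end_ => rfl
  | choice p d br ih => simp [rename, subst, ih]
  | mu T ih =>
      simp only [rename, subst, ih]
      rw [liftS_liftR]
  | var n => rfl

lemma rename_liftS (σ : ℕ → SType A) (f : ℕ → ℕ) :
    (fun n => (liftS σ n).rename (liftR f)) = liftS (fun n => (σ n).rename f) := by
  funext n
  cases n with
  | zero => rfl
  | succ n => simp only [liftS, rename_rename]; rfl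

lemma rename_subst (T : SType A) (σ : ℕ → SType A) (f : ℕ → ℕ) :
    (T.subst σ).rename f = T.subst (fun n => (σ n).rename f) := by
  induction T generalizing f σ with
  | end_ => rfl
  | choice p d br ih => simp [rename, subst, ih]
  | mu T ih =>
      simp only [rename, subst, ih]
      rw [rename_liftS]
  | var n => rfl

lemma subst_liftS (σ ρ : ℕ → SType A) :
    (fun n => (liftS σ n).subst (liftS ρ)) = liftS (fun n => (σ n).subst ρ) := by
  funext n
  cases n with
  | zero => rfl
  | succ n =>
      simp only [liftS, subst_rename, rename_subst]
      rfl

lemma subst_subst (T : SType A) (σ ρ : ℕ → SType A) :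
    (T.subst σ).subst ρ = T.subst (fun n => (σ n).subst ρ) := by
  induction T generalizing σ ρ with
  | end_ => rfl
  | choice p d br ih => simp [subst, ih]
  | mu T ih =>
      simp only [subst, ih]
      rw [subst_liftS]
  | var n => rfl

lemma liftS_var : liftS (.var : ℕ → SType A) = .var := by
  funext n; cases n <;> rfl

lemma subst_var (T : SType A) : T.subst .var = T := by
  induction T with
  | end_ => rfl
  | choice p d br ih => simp [subst, ih]
  | mu T ih => simp only [subst, liftS_var, ih]
  | var n => rfl

/-- The key algebraic identity for unfolding a substituted recursive type. -/
lemma unfold_subst (T : SType A) (σ : ℕ → SType A) :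
    (T.subst (liftS σ)).unfold
      = T.subst (consS ((SType.mu T).subst σ) σ) := by
  show (T.subst (liftS σ)).subst (consS (SType.mu (T.subst (liftS σ))) .var) = _
  rw [subst_subst]
  congr 1
  funext n
  cases n with
  | zero => rfl
  | succ n =>
      show ((σ n).rename Nat.succ).subst (consS (SType.mu (T.subst (liftS σ))) .var) = σ n
      rw [subst_rename]
      have h2 : (consS (SType.mu (T.subst (liftS σ))) (.var : ℕ → SType A)) ∘ Nat.succ
          = (.var : ℕ → SType A) := by
        funext m; rfl
      rw [h2, subst_var]

/-! #### Preservation of `closedUnder`, `guardedVar`, `wf` -/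

lemma closedUnder_rename {T : SType A} {j : ℕ} (h : T.closedUnder j) {f : ℕ → ℕ} {k : ℕ}
    (hf : ∀ n < j, f n < k) : (T.rename f).closedUnder k := by
  induction T generalizing j f k with
  | end_ => trivial
  | choice p d br ih =>
      intro a ha; exact ih a (h a ha) hf
  | mu T ih =>
      exact ih h (by
        intro n hn
        cases n with
        | zero => exact Nat.succ_pos k
        | succ n => exact Nat.succ_lt_succ (hf n (Nat.lt_of_succ_lt_succ hn)))
  | var n => exact hf n h

lemma closedUnder_subst {T : SType A} {j : ℕ} (h : T.closedUnder j) {σ : ℕ → SType A} {k : ℕ}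
    (hσ : ∀ n < j, (σ n).closedUnder k) : (T.subst σ).closedUnder k := by
  induction T generalizing j σ k with
  | end_ => trivial
  | choice p d br ih =>
      intro a ha; exact ih a (h a ha) hσ
  | mu T ih =>
      exact ih h (by
        intro n hn
        cases n with
        | zero => exact Nat.succ_pos k
        | succ n =>
            exact closedUnder_rename (hσ n (Nat.lt_of_succ_lt_succ hn))
              (fun m hm => Nat.succ_lt_succ hm))
  | var n => exact hσ n h

lemma guardedVar_rename {T : SType A} {x : ℕ} (h : T.guardedVar x) {f : ℕ → ℕ}
    (hf : ∀ m, f m = f x → m = x) : (T.rename f).guardedVar (f x) := by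
  induction T generalizing x f with
  | end_ => trivial
  | choice p d br ih => trivial
  | mu T ih =>
      show (T.rename (liftR f)).guardedVar (f x + 1)
      have : f x + 1 = liftR f (x + 1) := rfl
      rw [this]
      exact ih h (by
        intro m hm
        cases m with
        | zero => exact absurd hm (by simp [liftR])
        | succ m =>
            simp only [liftR] at hm
            exact congrArg Nat.succ (hf m (Nat.succ_injective hm)))
  | var n =>
      intro hc
      exact h (hf n hc)

lemma guardedVar_rename_ne {T : SType A} {x : ℕ} {f : ℕ → ℕ}
    (hf : ∀ m, f m ≠ x) : (T.rename f).guardedVar x := by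
  induction T generalizing x f with
  | end_ => trivial
  | choice p d br ih => trivial
  | mu T ih =>
      exact ih (by
        intro m
        cases m with
        | zero => simp [liftR]
        | succ m =>
            simp only [liftR]
            intro hc
            exact hf m (Nat.succ_injective hc))
  | var n => exact hf n

lemma guardedVar_subst {T : SType A} {x : ℕ} (h : T.guardedVar x) {σ : ℕ → SType A}
    (hσ : ∀ m, m ≠ x → (σ m).guardedVar x) : (T.subst σ).guardedVar x := by
  induction T generalizing x σ with
  | end_ => trivial
  | choice p d br ih => trivial
  | mu T ih =>
      exact ih h (by
        intro m hm
        cases m with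
        | zero => exact fun hc => Nat.noConfusion hc
        | succ m =>
            show ((σ m).rename Nat.succ).guardedVar (x + 1)
            have hmx : m ≠ x := fun hc => hm (congrArg Nat.succ hc)
            have : x + 1 = Nat.succ x := rfl
            rw [this]
            exact guardedVar_rename (hσ m hmx) (fun a b => Nat.succ_injective b))
  | var n => exact hσ n h

lemma wf_rename {T : SType A} (h : T.wf) (f : ℕ → ℕ) : (T.rename f).wf := by
  induction T generalizing f with
  | end_ => trivial
  | choice p d br ih => exact ⟨h.1, fun a ha => ih a (h.2 a ha) f⟩
  | mu T ih =>
      refine ⟨ih h.1 _, ?_⟩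
      have h0 : (0 : ℕ) = liftR f 0 := rfl
      rw [h0]
      exact guardedVar_rename h.2 (by
        intro m hm
        cases m with
        | zero => rfl
        | succ m => exact absurd hm (by simp [liftR]))
  | var n => trivial

lemma wf_subst {T : SType A} (h : T.wf) {σ : ℕ → SType A} (hσ : ∀ i, (σ i).wf) :
    (T.subst σ).wf := by
  induction T generalizing σ with
  | end_ => trivial
  | choice p d br ih => exact ⟨h.1, fun a ha => ih a (h.2 a ha) hσ⟩
  | mu T ih =>
      refine ⟨ih h.1 (by
        intro i
        cases i with
        | zero => trivial
        | succ i => exact wf_rename (hσ i) Nat.succ), ?_⟩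
      exact guardedVar_subst h.2 (by
        intro m hm
        cases m with
        | zero => exact absurd rfl hm
        | succ m =>
            exact guardedVar_rename_ne (fun a => Nat.succ_ne_zero a))
  | var n => exact hσ n

lemma unfold_wf {T : SType A} (h : (SType.mu T).wf) : T.unfold.wf := by
  refine wf_subst h.1 ?_
  intro i
  cases i with
  | zero => exact h
  | succ i => trivial

lemma unfold_closed {T : SType A} (hw : (SType.mu T).closed) : T.unfold.closed := by
  refine closedUnder_subst (j := 1) hw ?_
  intro n hn
  interval_cases n
  exact hw

end SType

namespace SType

/-! #### Leading `mu` count -/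

/-- Number of leading `mu` binders. -/
def leadMu : SType A → ℕ
  | .mu T => leadMu T + 1
  | _ => 0

lemma leadMu_subst {T : SType A} {j : ℕ} (hc : T.closedUnder j) (σ : ℕ → SType A)
    (hσ : ∀ i < j, (∃ m, σ i = .var m) ∨ T.guardedVar i) :
    leadMu (T.subst σ) = leadMu T := by
  induction T generalizing j σ with
  | end_ => rfl
  | choice p d br ih => rfl
  | mu T ih =>
      show leadMu (T.subst (liftS σ)) + 1 = leadMu T + 1
      have harg : ∀ i < j + 1, (∃ m, liftS σ i = .var m) ∨ T.guardedVar i := by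
        intro i hi
        cases i with
        | zero => exact Or.inl ⟨0, rfl⟩
        | succ i =>
            rcases hσ i (Nat.lt_of_succ_lt_succ hi) with ⟨m, hm⟩ | hg
            · exact Or.inl ⟨m + 1, by simp [liftS, hm, rename]⟩
            · exact Or.inr hg
      rw [ih (j := j + 1) hc (liftS σ) harg]
  | var n =>
      rcases hσ n hc with ⟨m, hm⟩ | hg
      · show leadMu (σ n) = 0
        rw [hm]; rfl
      · exact absurd rfl hg

lemma leadMu_unfold {T : SType A} (hw : (SType.mu T).wf) (hc : (SType.mu T).closed) :
    leadMu T.unfold = leadMu T := by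
  refine leadMu_subst (j := 1) hc _ ?_
  intro i hi
  interval_cases i
  exact Or.inr hw.2

lemma closed_not_var {n : ℕ} (h : (SType.var n : SType A).closed) : False :=
  Nat.not_lt_zero n h

/-! #### Step lemmas -/

lemma step_mu_iff {T : SType A} {α : Act A} {V : SType A} :
    Step (SType.mu T) α V ↔ Step T.unfold α V := by
  constructor
  · intro h; cases h with | unf h => exact h
  · exact Step.unf

lemma step_end {α : Act A} {V : SType A} (h : Step (SType.end_ : SType A) α V) : False := by
  cases h

lemma step_choice_inv {p : Pol} {d : Finset A} {br : A → SType A} {α : Act A} {V : SType A}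
    (h : Step (SType.choice p d br) α V) :
    α.1 = p ∧ α.2 ∈ d ∧ V = br α.2 := by
  cases h with | choice hmem => exact ⟨rfl, hmem, rfl⟩

lemma step_cwf {T : SType A} {α : Act A} {V : SType A} (h : Step T α V)
    (hw : T.wf) (hc : T.closed) : V.wf ∧ V.closed := by
  induction h with
  | choice hmem => exact ⟨hw.2 _ hmem, hc _ hmem⟩
  | unf h ih => exact ih (unfold_wf hw) (unfold_closed hc)

/-- All closed wf types with `leadMu = 0` are `end_` or a choice. -/
lemma head_shape {T : SType A} (hc : T.closed) (h0 : leadMu T = 0) :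
    T = .end_ ∨ (∃ p d br, T = SType.choice p d br) := by
  cases T with
  | end_ => exact Or.inl rfl
  | choice p d br => exact Or.inr ⟨p, d, br, rfl⟩
  | mu T => exact absurd h0 (by simp [leadMu])
  | var n => exact absurd hc (fun h => Nat.not_lt_zero n h)

end SType

namespace Formula

/-! #### Formula substitution pack -/

lemma rename_rename (φ : Formula A) (f g : ℕ → ℕ) :
    (φ.rename f).rename g = φ.rename (g ∘ f) := by
  induction φ generalizing f g with
  | tt => rfl
  | ff => rfl
  | and φ ψ ih1 ih2 => simp [rename, ih1, ih2]
  | or φ ψ ih1 ih2 => simp [rename, ih1, ih2]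
  | box α φ ih => simp [rename, ih]
  | dia α φ ih => simp [rename, ih]
  | nu φ ih => simp [rename, ih, SType.liftR_comp]
  | var n => rfl

lemma liftF_liftR (τ : ℕ → Formula A) (f : ℕ → ℕ) :
    (liftF τ) ∘ (SType.liftR f) = liftF (τ ∘ f) := by
  funext n; cases n <;> rfl

lemma subst_rename (φ : Formula A) (f : ℕ → ℕ) (τ : ℕ → Formula A) :
    (φ.rename f).subst τ = φ.subst (τ ∘ f) := by
  induction φ generalizing f τ with
  | tt => rfl
  | ff => rfl
  | and φ ψ ih1 ih2 => simp [rename, subst, ih1, ih2]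
  | or φ ψ ih1 ih2 => simp [rename, subst, ih1, ih2]
  | box α φ ih => simp [rename, subst, ih]
  | dia α φ ih => simp [rename, subst, ih]
  | nu φ ih => simp only [rename, subst, ih]; rw [liftF_liftR]
  | var n => rfl

lemma rename_liftF (τ : ℕ → Formula A) (f : ℕ → ℕ) :
    (fun n => (liftF τ n).rename (SType.liftR f)) = liftF (fun n => (τ n).rename f) := by
  funext n
  cases n with
  | zero => rfl
  | succ n => simp only [liftF, rename_rename]; rfl

lemma rename_subst (φ : Formula A) (τ : ℕ → Formula A) (f : ℕ → ℕ) :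
    (φ.subst τ).rename f = φ.subst (fun n => (τ n).rename f) := by
  induction φ generalizing f τ with
  | tt => rfl
  | ff => rfl
  | and φ ψ ih1 ih2 => simp [rename, subst, ih1, ih2]
  | or φ ψ ih1 ih2 => simp [rename, subst, ih1, ih2]
  | box α φ ih => simp [rename, subst, ih]
  | dia α φ ih => simp [rename, subst, ih]
  | nu φ ih => simp only [rename, subst, ih]; rw [rename_liftF]
  | var n => rfl

lemma subst_liftF (τ ρ : ℕ → Formula A) :
    (fun n => (liftF τ n).subst (liftF ρ)) = liftF (fun n => (τ n).subst ρ) := by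
  funext n
  cases n with
  | zero => rfl
  | succ n => simp only [liftF, subst_rename, rename_subst]; rfl

lemma subst_subst (φ : Formula A) (τ ρ : ℕ → Formula A) :
    (φ.subst τ).subst ρ = φ.subst (fun n => (τ n).subst ρ) := by
  induction φ generalizing τ ρ with
  | tt => rfl
  | ff => rfl
  | and φ ψ ih1 ih2 => simp [subst, ih1, ih2]
  | or φ ψ ih1 ih2 => simp [subst, ih1, ih2]
  | box α φ ih => simp [subst, ih]
  | dia α φ ih => simp [subst, ih]
  | nu φ ih => simp only [subst, ih]; rw [subst_liftF]
  | var n => rfl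

lemma liftF_var : liftF (.var : ℕ → Formula A) = .var := by
  funext n; cases n <;> rfl

lemma subst_var (φ : Formula A) : φ.subst .var = φ := by
  induction φ with
  | tt => rfl
  | ff => rfl
  | and φ ψ ih1 ih2 => simp [subst, ih1, ih2]
  | or φ ψ ih1 ih2 => simp [subst, ih1, ih2]
  | box α φ ih => simp [subst, ih]
  | dia α φ ih => simp [subst, ih]
  | nu φ ih => simp only [subst, liftF_var, ih]
  | var n => rfl

/-- Instantiating a lifted substitution. -/
lemma inst_subst_liftF (φ : Formula A) (τ : ℕ → Formula A) (χ : Formula A) :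
    (φ.subst (liftF τ)).inst χ = φ.subst (consF χ τ) := by
  show (φ.subst (liftF τ)).subst (consF χ .var) = _
  rw [subst_subst]
  congr 1
  funext n
  cases n with
  | zero => rfl
  | succ n =>
      show ((τ n).rename Nat.succ).subst (consF χ .var) = τ n
      rw [subst_rename]
      have h2 : (consF χ (.var : ℕ → Formula A)) ∘ Nat.succ = (.var : ℕ → Formula A) := by
        funext m; rfl
      rw [h2, subst_var]

end Formula

/-! #### Satisfaction lemmas -/

lemma sat_ff {T : SType A} (h : Sat T .ff) : False := by cases h

lemma sat_var {T : SType A} {n : ℕ} (h : Sat T (.var n)) : False := by cases h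

lemma sat_and_inv {T : SType A} {φ ψ : Formula A} (h : Sat T (.and φ ψ)) :
    Sat T φ ∧ Sat T ψ := by cases h with | and h1 h2 => exact ⟨h1, h2⟩

lemma sat_or_inv {T : SType A} {φ ψ : Formula A} (h : Sat T (.or φ ψ)) :
    Sat T φ ∨ Sat T ψ := by
  cases h with
  | orl h => exact Or.inl h
  | orr h => exact Or.inr h

lemma sat_box_inv {T : SType A} {α : Act A} {φ : Formula A} (h : Sat T (.box α φ)) :
    ∀ T', Step T α T' → Sat T' φ := by cases h with | box h => exact h

lemma sat_dia_inv {T : SType A} {α : Act A} {φ : Formula A} (h : Sat T (.dia α φ)) :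
    ∃ T', Step T α T' ∧ Sat T' φ := by cases h with | dia hs h => exact ⟨_, hs, h⟩

lemma sat_nu_inv {T : SType A} {φ : Formula A} (h : Sat T (.nu φ)) :
    ∀ n, Sat T (φ.nuApprox n) := by cases h with | nu h => exact h

lemma sat_bigAnd {T : SType A} {l : List (Formula A)}
    (h : ∀ φ ∈ l, Sat T φ) : Sat T (bigAnd l) := by
  induction l with
  | nil => exact Sat.tt
  | cons φ rest ih =>
      exact Sat.and (h φ (by simp)) (ih (fun ψ hψ => h ψ (by simp [hψ])))

lemma sat_bigAnd_inv {T : SType A} {l : List (Formula A)}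
    (h : Sat T (bigAnd l)) : ∀ φ ∈ l, Sat T φ := by
  induction l with
  | nil => simp
  | cons φ rest ih =>
      rcases sat_and_inv h with ⟨h1, h2⟩
      intro ψ hψ
      rcases List.mem_cons.mp hψ with rfl | hψ
      · exact h1
      · exact ih h2 ψ hψ

lemma sat_bigOr {T : SType A} {l : List (Formula A)} {φ : Formula A}
    (hφ : φ ∈ l) (h : Sat T φ) : Sat T (bigOr l) := by
  induction l with
  | nil => simp at hφ
  | cons ψ rest ih =>
      rcases List.mem_cons.mp hφ with rfl | hφ
      · exact Sat.orl h
      · exact Sat.orr (ih hφ)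

lemma sat_bigOr_inv {T : SType A} {l : List (Formula A)}
    (h : Sat T (bigOr l)) : ∃ φ ∈ l, Sat T φ := by
  induction l with
  | nil => exact absurd h sat_ff
  | cons ψ rest ih =>
      rcases sat_or_inv h with h | h
      · exact ⟨ψ, by simp, h⟩
      · rcases ih h with ⟨φ, hφ, hs⟩
        exact ⟨φ, by simp [hφ], hs⟩

/-- Satisfaction only depends on the outgoing transitions of the root. -/
lemma sat_of_step_iff {X Y : SType A} (hXY : ∀ α V, Step X α V ↔ Step Y α V)
    {φ : Formula A} (h : Sat X φ) : Sat Y φ := by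
  induction h with
  | tt => exact Sat.tt
  | and h1 h2 ih1 ih2 => exact Sat.and (ih1 hXY) (ih2 hXY)
  | orl h ih => exact Sat.orl (ih hXY)
  | orr h ih => exact Sat.orr (ih hXY)
  | box h ih => exact Sat.box (fun T' hs => h T' ((hXY _ _).mpr hs))
  | dia hs h ih => exact Sat.dia ((hXY _ _).mp hs) h
  | nu h ih => exact Sat.nu (fun n => ih n hXY)

lemma sat_mu_iff {U : SType A} {φ : Formula A} :
    Sat (SType.mu U) φ ↔ Sat U.unfold φ :=
  ⟨sat_of_step_iff (fun _ _ => SType.step_mu_iff),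
   sat_of_step_iff (fun _ _ => SType.step_mu_iff.symm)⟩

/-! #### bigAnd / bigOr / charF under substitution and renaming -/

lemma bigAnd_subst (l : List (Formula A)) (τ : ℕ → Formula A) :
    (bigAnd l).subst τ = bigAnd (l.map (fun φ => φ.subst τ)) := by
  induction l with
  | nil => rfl
  | cons φ rest ih => simp [bigAnd, Formula.subst, ih]

lemma bigOr_subst (l : List (Formula A)) (τ : ℕ → Formula A) :
    (bigOr l).subst τ = bigOr (l.map (fun φ => φ.subst τ)) := by
  induction l with
  | nil => rfl
  | cons φ rest ih => simp [bigOr, Formula.subst, ih]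

lemma bigAnd_rename (l : List (Formula A)) (f : ℕ → ℕ) :
    (bigAnd l).rename f = bigAnd (l.map (fun φ => φ.rename f)) := by
  induction l with
  | nil => rfl
  | cons φ rest ih => simp [bigAnd, Formula.rename, ih]

lemma bigOr_rename (l : List (Formula A)) (f : ℕ → ℕ) :
    (bigOr l).rename f = bigOr (l.map (fun φ => φ.rename f)) := by
  induction l with
  | nil => rfl
  | cons φ rest ih => simp [bigOr, Formula.rename, ih]

section CharFLemmas

variable [Fintype A] [LinearOrder A]

lemma mem_allActs (α : Act A) : α ∈ allActs A := by
  obtain ⟨p, a⟩ := α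
  have ha : a ∈ (Finset.univ : Finset A).sort (· ≤ ·) := by
    rw [Finset.mem_sort]; exact Finset.mem_univ a
  cases p with
  | send => exact List.mem_append.mpr (Or.inl (List.mem_map.mpr ⟨a, ha, rfl⟩))
  | recv => exact List.mem_append.mpr (Or.inr (List.mem_map.mpr ⟨a, ha, rfl⟩))

lemma charF_end (s : Pol) : charF (SType.end_ : SType A) s
    = bigAnd ((allActs A).map (fun α => .box α .ff)) := rfl

lemma charF_var (n : ℕ) (s : Pol) : charF (SType.var n : SType A) s = .var n := rfl

lemma charF_mu (T : SType A) (s : Pol) :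
    charF (SType.mu T) s = .nu (charF T s) := rfl

lemma charF_choice_pos (d : Finset A) (br : A → SType A) (s : Pol) :
    charF (SType.choice s d br) s
      = bigAnd ((d.sort (· ≤ ·)).map
          (fun a => .dia (s, a) (charF (br a) s))) := by
  simp [charF]

lemma charF_choice_neg {p s : Pol} (h : p ≠ s) (d : Finset A) (br : A → SType A) :
    charF (SType.choice p d br) s
      = .and
          (bigAnd ((d.sort (· ≤ ·)).map
            (fun a => .box (p, a) (charF (br a) s))))
          (.and
            (bigOr ((d.sort (· ≤ ·)).map (fun a => Formula.dia (p, a) .tt)))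
            (bigAnd (((allActs A).filter
                (fun α => ¬ (α.1 = p ∧ α.2 ∈ d))).map (fun α => .box α .ff)))) := by
  simp [charF, h]

lemma charF_rename (T : SType A) (f : ℕ → ℕ) (s : Pol) :
    charF (T.rename f) s = (charF T s).rename f := by
  induction T generalizing f with
  | end_ =>
      show charF (SType.end_ : SType A) s = (charF (SType.end_ : SType A) s).rename f
      simp [charF_end, bigAnd_rename, List.map_map, Function.comp_def, Formula.rename]
  | choice p d br ih =>
      show charF (SType.choice p d (fun a => (br a).rename f)) s = _
      by_cases hp : p = s
      · subst hp
        simp [charF_choice_pos, bigAnd_rename, List.map_map, Formula.rename, ih,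
          Function.comp_def]
      · simp [charF_choice_neg hp, bigAnd_rename, bigOr_rename, List.map_map,
          Formula.rename, ih, Function.comp_def]
  | mu T ih =>
      show Formula.nu (charF (T.rename (SType.liftR f)) s) = _
      simp [ih, Formula.rename, charF_mu]
  | var n => rfl

lemma charF_subst (T : SType A) (σ : ℕ → SType A) (s : Pol) :
    charF (T.subst σ) s = (charF T s).subst (fun n => charF (σ n) s) := by
  induction T generalizing σ with
  | end_ =>
      show charF (SType.end_ : SType A) s
        = (charF (SType.end_ : SType A) s).subst (fun n => charF (σ n) s)
      simp [charF_end, bigAnd_subst, List.map_map, Function.comp_def, Formula.subst]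
  | choice p d br ih =>
      show charF (SType.choice p d (fun a => (br a).subst σ)) s = _
      by_cases hp : p = s
      · subst hp
        simp [charF_choice_pos, bigAnd_subst, List.map_map, Formula.subst, ih,
          Function.comp_def]
      · simp [charF_choice_neg hp, bigAnd_subst, bigOr_subst, List.map_map,
          Formula.subst, ih, Function.comp_def]
  | mu T ih =>
      show Formula.nu (charF (T.subst (SType.liftS σ)) s) = _
      rw [charF_mu, Formula.subst, ih]
      congr 1
      congr 1
      funext n
      cases n with
      | zero => rfl
      | succ n =>
          show charF ((σ n).rename Nat.succ) s = ((charF (σ n) s).rename Nat.succ)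
          exact charF_rename _ _ _
  | var n => rfl

end CharFLemmas

/-! #### Subtype and SubK lemmas -/

lemma subStep_mono {s : Pol} {R R' : SType A → SType A → Prop}
    (hRR' : ∀ X Y, R X Y → R' X Y) {T U : SType A} (h : SubStep s R T U) :
    SubStep s R' T U := by
  rcases h with ⟨h1, h2⟩ | ⟨dT, brT, dU, brU, h1, h2, h3, h4⟩ |
    ⟨dT, brT, dU, brU, h1, h2, h3, h4⟩ | ⟨T₀, h1, h2⟩ | ⟨U₀, h1, h2⟩
  · exact Or.inl ⟨h1, h2⟩
  · exact Or.inr (Or.inl ⟨dT, brT, dU, brU, h1, h2, h3, fun a ha => hRR' _ _ (h4 a ha)⟩)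
  · exact Or.inr (Or.inr (Or.inl ⟨dT, brT, dU, brU, h1, h2, h3,
      fun a ha => hRR' _ _ (h4 a ha)⟩))
  · exact Or.inr (Or.inr (Or.inr (Or.inl ⟨T₀, h1, hRR' _ _ h2⟩)))
  · exact Or.inr (Or.inr (Or.inr (Or.inr ⟨U₀, h1, hRR' _ _ h2⟩)))

lemma subtype_destruct {s : Pol} {T U : SType A} (h : Subtype s T U) :
    SubStep s (Subtype s) T U := by
  obtain ⟨R, hR, hTU⟩ := h
  exact subStep_mono (fun X Y hXY => ⟨R, hR, hXY⟩) (hR _ _ hTU)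

lemma subtype_of_subStep_closed {s : Pol} {R : SType A → SType A → Prop}
    (hR : ∀ X Y, R X Y → SubStep s R X Y) {T U : SType A} (h : R T U) :
    Subtype s T U := ⟨R, hR, h⟩

lemma subtype_unfold_l {s : Pol} {T U : SType A} (h : Subtype s (.mu T) U) :
    Subtype s T.unfold U := by
  obtain ⟨R, hR, hTU⟩ := h
  refine ⟨fun X Y => R X Y ∨ (∃ X₀, X = X₀.unfold ∧ R (.mu X₀) Y), ?_, Or.inr ⟨T, rfl, hTU⟩⟩
  rintro X Y (hXY | ⟨X₀, rfl, hXY⟩)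
  · exact subStep_mono (fun _ _ h => Or.inl h) (hR _ _ hXY)
  · rcases hR _ _ hXY with ⟨h1, h2⟩ | ⟨dT, brT, dU, brU, h1, h2, h3, h4⟩ |
      ⟨dT, brT, dU, brU, h1, h2, h3, h4⟩ | ⟨T₀, h1, h2⟩ | ⟨U₀, h1, h2⟩
    · exact absurd h1 (by simp)
    · exact absurd h1 (by simp)
    · exact absurd h1 (by simp)
    · cases h1
      exact subStep_mono (fun _ _ h => Or.inl h) (hR _ _ h2)
    · exact Or.inr (Or.inr (Or.inr (Or.inr ⟨U₀, h1, Or.inr ⟨X₀, rfl, h2⟩⟩)))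

lemma subtype_unfold_r {s : Pol} {T U : SType A} (h : Subtype s T (.mu U)) :
    Subtype s T U.unfold := by
  obtain ⟨R, hR, hTU⟩ := h
  refine ⟨fun X Y => R X Y ∨ (∃ Y₀, Y = Y₀.unfold ∧ R X (.mu Y₀)), ?_, Or.inr ⟨U, rfl, hTU⟩⟩
  rintro X Y (hXY | ⟨Y₀, rfl, hXY⟩)
  · exact subStep_mono (fun _ _ h => Or.inl h) (hR _ _ hXY)
  · rcases hR _ _ hXY with ⟨h1, h2⟩ | ⟨dT, brT, dU, brU, h1, h2, h3, h4⟩ |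
      ⟨dT, brT, dU, brU, h1, h2, h3, h4⟩ | ⟨T₀, h1, h2⟩ | ⟨U₀, h1, h2⟩
    · exact absurd h2 (by simp)
    · exact absurd h2 (by simp)
    · exact absurd h2 (by simp)
    · exact Or.inr (Or.inr (Or.inr (Or.inl ⟨T₀, h1, Or.inr ⟨Y₀, rfl, h2⟩⟩)))
    · injection h1 with h1
      subst h1
      exact subStep_mono (fun _ _ h => Or.inl h) (hR _ _ h2)

lemma subtype_var_false {s : Pol} {n : ℕ} {U : SType A}
    (hUw : U.wf) (hUc : U.closed) (h : Subtype s (.var n) U) : False := by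
  suffices H : ∀ c U, SType.leadMu U = c → U.wf → U.closed →
      Subtype s (.var n) U → False from H _ U rfl hUw hUc h
  intro c
  induction c using Nat.strong_induction_on with
  | _ c ih =>
    intro U hlm hUw hUc h
    rcases subtype_destruct h with ⟨h1, h2⟩ | ⟨dT, brT, dU, brU, h1, h2, h3, h4⟩ |
      ⟨dT, brT, dU, brU, h1, h2, h3, h4⟩ | ⟨T₀, h1, h2⟩ | ⟨U₀, h1, h2⟩
    · exact absurd h1 (by simp)
    · exact absurd h1 (by simp)
    · exact absurd h1 (by simp)
    · exact absurd h1 (by simp)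
    · subst h1
      exact ih (SType.leadMu U₀.unfold)
        (by rw [SType.leadMu_unfold hUw hUc, ← hlm]; simp [SType.leadMu])
        _ rfl (SType.unfold_wf hUw) (SType.unfold_closed hUc) h2

/-- `SubK` is downward closed in the index. -/
lemma subK_mono {s : Pol} {k : ℕ} {T U : SType A} (h : SubK s k T U) :
    ∀ j ≤ k, SubK s j T U := by
  induction h with
  | zero => intro j hj; interval_cases j; exact SubK.zero
  | end_ =>
      intro j hj
      cases j with
      | zero => exact SubK.zero
      | succ j => exact SubK.end_
  | ch hsub hbr ih =>
      intro j hj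
      cases j with
      | zero => exact SubK.zero
      | succ j => exact SubK.ch hsub (fun a ha => ih a ha j (Nat.lt_succ_iff.mp hj))
  | coch hsub hbr ih =>
      intro j hj
      cases j with
      | zero => exact SubK.zero
      | succ j => exact SubK.coch hsub (fun a ha => ih a ha j (Nat.lt_succ_iff.mp hj))
  | recL h ih =>
      intro j hj
      cases j with
      | zero => exact SubK.zero
      | succ j => exact SubK.recL (ih _ hj)
  | recR h ih =>
      intro j hj
      cases j with
      | zero => exact SubK.zero
      | succ j => exact SubK.recR (ih _ hj)

lemma subK_mu_l {s : Pol} {k : ℕ} {T U : SType A} (h : SubK s k (.mu T) U) :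
    SubK s k T.unfold U := by
  generalize hX : SType.mu T = X at h
  induction h with
  | zero => exact SubK.zero
  | end_ => exact absurd hX (by simp)
  | ch hsub hbr => exact absurd hX (by simp)
  | coch hsub hbr => exact absurd hX (by simp)
  | recL h ih =>
      injection hX with hX
      subst hX
      exact h
  | recR h ih => exact SubK.recR (ih hX)

lemma subK_mu_r {s : Pol} {k : ℕ} {T U : SType A} (h : SubK s k T (.mu U)) :
    SubK s k T U.unfold := by
  generalize hX : SType.mu U = X at h
  induction h with
  | zero => exact SubK.zero
  | end_ => exact absurd hX (by simp)
  | ch hsub hbr => exact absurd hX (by simp)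
  | coch hsub hbr => exact absurd hX (by simp)
  | recL h ih => exact SubK.recL (ih hX)
  | recR h ih =>
      injection hX with hX
      subst hX
      exact h

lemma subK_inv_end_choice {s : Pol} {k : ℕ} {d : Finset A} {br : A → SType A}
    (h : SubK s (k + 1) .end_ (SType.choice s d br)) : False := by
  cases h

lemma subK_inv_choice_end {s : Pol} {k : ℕ} {p : Pol} {d : Finset A} {br : A → SType A}
    (h : SubK s (k + 1) (SType.choice p d br) .end_) : False := by
  cases h

lemma subK_inv_send {k : ℕ} {dT dU : Finset A} {brT brU : A → SType A}
    (h : SubK .send (k + 1) (SType.choice .send dT brT) (SType.choice .send dU brU)) :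
    dT ⊆ dU ∧ ∀ a ∈ dT, SubK .send k (brT a) (brU a) := by
  cases h with
  | ch hsub hbr => exact ⟨hsub, hbr⟩

lemma subK_inv_recv {k : ℕ} {dT dU : Finset A} {brT brU : A → SType A}
    (h : SubK .send (k + 1) (SType.choice .recv dT brT) (SType.choice .recv dU brU)) :
    dU ⊆ dT ∧ ∀ a ∈ dU, SubK .send k (brT a) (brU a) := by
  cases h with
  | coch hsub hbr => exact ⟨hsub, hbr⟩

lemma subK_inv_sr {k : ℕ} {dT dU : Finset A} {brT brU : A → SType A}
    (h : SubK .send (k + 1) (SType.choice .send dT brT) (SType.choice .recv dU brU)) :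
    False := by cases h

lemma subK_inv_rs {k : ℕ} {dT dU : Finset A} {brT brU : A → SType A}
    (h : SubK .send (k + 1) (SType.choice .recv dT brT) (SType.choice .send dU brU)) :
    False := by cases h

lemma subK_inv_es {k : ℕ} {p : Pol} {dU : Finset A} {brU : A → SType A}
    (h : SubK .send (k + 1) .end_ (SType.choice p dU brU)) : False := by cases h

lemma subK_inv_se {k : ℕ} {p : Pol} {dT : Finset A} {brT : A → SType A}
    (h : SubK .send (k + 1) (SType.choice p dT brT) .end_) : False := by cases h

/-- If all finite approximations of subtyping hold then subtyping holds. -/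
lemma subtype_of_subK {T U : SType A}
    (hTw : T.wf) (hTc : T.closed) (hUw : U.wf) (hUc : U.closed)
    (h : ∀ k, SubK .send k T U) : Subtype .send T U := by
  refine ⟨fun X Y => X.wf ∧ X.closed ∧ Y.wf ∧ Y.closed ∧ ∀ k, SubK .send k X Y, ?_,
    hTw, hTc, hUw, hUc, h⟩
  rintro X Y ⟨hXw, hXc, hYw, hYc, hk⟩
  cases X with
  | var n => exact absurd hXc SType.closed_not_var
  | mu X₀ =>
      exact Or.inr (Or.inr (Or.inr (Or.inl ⟨X₀, rfl, SType.unfold_wf hXw,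
        SType.unfold_closed hXc, hYw, hYc, fun k => subK_mu_l (hk k)⟩)))
  | end_ =>
      cases Y with
      | var n => exact absurd hYc SType.closed_not_var
      | mu Y₀ =>
          exact Or.inr (Or.inr (Or.inr (Or.inr ⟨Y₀, rfl, hXw, hXc,
            SType.unfold_wf hYw, SType.unfold_closed hYc, fun k => subK_mu_r (hk k)⟩)))
      | end_ => exact Or.inl ⟨rfl, rfl⟩
      | choice p dU brU => exact absurd (hk 1) (fun h => subK_inv_es h)
  | choice p dX brX =>
      cases Y with
      | var n => exact absurd hYc SType.closed_not_var
      | mu Y₀ =>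
          exact Or.inr (Or.inr (Or.inr (Or.inr ⟨Y₀, rfl, hXw, hXc,
            SType.unfold_wf hYw, SType.unfold_closed hYc, fun k => subK_mu_r (hk k)⟩)))
      | end_ => exact absurd (hk 1) (fun h => subK_inv_se h)
      | choice q dY brY =>
          cases p with
          | send =>
              cases q with
              | recv => exact absurd (hk 1) (fun h => subK_inv_sr h)
              | send =>
                  refine Or.inr (Or.inl ⟨dX, brX, dY, brY, rfl, rfl,
                    (subK_inv_send (hk 1)).1, ?_⟩)
                  intro a ha
                  exact ⟨hXw.2 a ha, hXc a ha,
                    hYw.2 a ((subK_inv_send (hk 1)).1 ha), hYc a ((subK_inv_send (hk 1)).1 ha),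
                    fun k => (subK_inv_send (hk (k + 1))).2 a ha⟩
          | recv =>
              cases q with
              | send => exact absurd (hk 1) (fun h => subK_inv_rs h)
              | recv =>
                  refine Or.inr (Or.inr (Or.inl ⟨dX, brX, dY, brY, rfl, rfl,
                    (subK_inv_recv (hk 1)).1, ?_⟩))
                  intro a ha
                  exact ⟨hXw.2 a ((subK_inv_recv (hk 1)).1 ha), hXc a ((subK_inv_recv (hk 1)).1 ha),
                    hYw.2 a ha, hYc a ha,
                    fun k => (subK_inv_recv (hk (k + 1))).2 a ha⟩

/-! #### Soundness: subtyping implies satisfaction of the characteristic formula -/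

section Main

variable [Fintype A] [LinearOrder A]

lemma sub_to_sat (T : SType A) :
    ∀ (σ : ℕ → SType A) (τ : ℕ → Formula A), T.wf →
      (∀ i U', U'.wf → U'.closed → Subtype .send (σ i) U' → Sat U' (τ i)) →
      ∀ U, U.wf → U.closed → Subtype .send (T.subst σ) U →
      Sat U ((charF T .send).subst τ) := by
  induction T with
  | var i =>
      intro σ τ hTw H U hUw hUc hsub
      exact H i U hUw hUc hsub
  | end_ =>
      intro σ τ hTw H U hUw hUc hsub
      show Sat U ((charF (SType.end_ : SType A) .send).subst τ)
      have hφ : ((charF (SType.end_ : SType A) .send).subst τ)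
          = bigAnd ((allActs A).map (fun α => .box α .ff)) := by
        simp [charF_end, bigAnd_subst, List.map_map, Function.comp_def, Formula.subst]
      rw [hφ]
      clear hφ
      suffices main : ∀ c U, SType.leadMu U = c → U.wf → U.closed →
          Subtype .send (SType.end_ : SType A) U →
          Sat U (bigAnd ((allActs A).map (fun α => .box α .ff))) from
        main _ U rfl hUw hUc hsub
      intro c
      induction c using Nat.strong_induction_on with
      | _ c ihc =>
        intro U hlm hUw hUc hsub
        cases U with
        | var n => exact absurd hUc SType.closed_not_var
        | mu U₀ =>
            refine sat_mu_iff.mpr (ihc (SType.leadMu U₀.unfold) ?_ _ rfl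
              (SType.unfold_wf hUw) (SType.unfold_closed hUc) (subtype_unfold_r hsub))
            rw [SType.leadMu_unfold hUw hUc, ← hlm]
            simp [SType.leadMu]
        | end_ =>
            refine sat_bigAnd ?_
            intro φ hφ
            rcases List.mem_map.mp hφ with ⟨α, hα, rfl⟩
            exact Sat.box (fun V hs => absurd hs SType.step_end)
        | choice q dU brU =>
            rcases subtype_destruct hsub with ⟨h1, h2⟩ | ⟨dT, brT, dU', brU', h1, h2, h3, h4⟩ |
              ⟨dT, brT, dU', brU', h1, h2, h3, h4⟩ | ⟨T₀, h1, h2⟩ | ⟨U₀, h1, h2⟩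
            · exact absurd h2 (by simp)
            · exact absurd h1 (by simp)
            · exact absurd h1 (by simp)
            · exact absurd h1 (by simp)
            · exact absurd h1 (by simp)
  | mu T₀ ih =>
      intro σ τ hTw H U hUw hUc hsub
      show Sat U (.nu ((charF T₀ .send).subst (Formula.liftF τ)))
      set B := (charF T₀ .send).subst (Formula.liftF τ) with hB
      have key : ∀ n U, U.wf → U.closed → Subtype .send ((SType.mu T₀).subst σ) U →
          Sat U (Formula.nuApprox B n) := by
        intro n
        induction n with
        | zero => exact fun U _ _ _ => Sat.tt
        | succ n ihn =>
            intro U hUw hUc hsub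
            show Sat U (B.inst (Formula.nuApprox B n))
            rw [hB, Formula.inst_subst_liftF]
            have hsub' : Subtype .send (T₀.subst
                (SType.consS ((SType.mu T₀).subst σ) σ)) U := by
              rw [← SType.unfold_subst]
              exact subtype_unfold_l hsub
            refine ih (SType.consS ((SType.mu T₀).subst σ) σ)
              (Formula.consF (Formula.nuApprox B n) τ) hTw.1 ?_ U hUw hUc hsub'
            intro i
            cases i with
            | zero => exact fun U' h1 h2 h3 => ihn U' h1 h2 h3
            | succ i => exact H i
      exact Sat.nu (fun n => key n U hUw hUc hsub)
  | choice p dT brT ih =>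
      intro σ τ hTw H U hUw hUc hsub
      obtain ⟨hne, hbrw⟩ := hTw
      cases p with
      | send =>
          show Sat U ((charF (SType.choice .send dT brT) .send).subst τ)
          rw [charF_choice_pos, bigAnd_subst, List.map_map]
          suffices main : ∀ c U, SType.leadMu U = c → U.wf → U.closed →
              Subtype .send (SType.choice .send dT (fun a => (brT a).subst σ)) U →
              Sat U (bigAnd ((dT.sort (· ≤ ·)).map
                ((fun (φ : Formula A) => φ.subst τ) ∘
                  fun a => .dia (.send, a) (charF (brT a) .send)))) from
            main _ U rfl hUw hUc hsub
          intro c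
          induction c using Nat.strong_induction_on with
          | _ c ihc =>
            intro U hlm hUw hUc hsub
            cases U with
            | var n => exact absurd hUc SType.closed_not_var
            | mu U₀ =>
                refine sat_mu_iff.mpr (ihc (SType.leadMu U₀.unfold) ?_ _ rfl
                  (SType.unfold_wf hUw) (SType.unfold_closed hUc) (subtype_unfold_r hsub))
                rw [SType.leadMu_unfold hUw hUc, ← hlm]
                simp [SType.leadMu]
            | end_ =>
                rcases subtype_destruct hsub with ⟨h1, h2⟩ |
                  ⟨dT', brT', dU', brU', h1, h2, h3, h4⟩ |
                  ⟨dT', brT', dU', brU', h1, h2, h3, h4⟩ | ⟨T₀, h1, h2⟩ | ⟨U₀, h1, h2⟩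
                · exact absurd h1 (by simp)
                · exact absurd h2 (by simp)
                · exact absurd h2 (by simp)
                · exact absurd h1 (by simp)
                · exact absurd h1 (by simp)
            | choice q dU brU =>
                rcases subtype_destruct hsub with ⟨h1, h2⟩ |
                  ⟨dT', brT', dU', brU', h1, h2, h3, h4⟩ |
                  ⟨dT', brT', dU', brU', h1, h2, h3, h4⟩ | ⟨T₀, h1, h2⟩ | ⟨U₀, h1, h2⟩
                · exact absurd h1 (by simp)
                · injection h1 with e1 e2 e3
                  subst e2; subst e3
                  injection h2 with f1 f2 f3
                  subst f1; subst f2; subst f3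
                  refine sat_bigAnd ?_
                  intro φ hφ
                  rcases List.mem_map.mp hφ with ⟨a, ha, rfl⟩
                  have haT : a ∈ dT := (Finset.mem_sort (α := A) (· ≤ ·)).mp ha
                  refine Sat.dia (Step.choice (h3 haT)) ?_
                  exact ih a σ τ (hbrw a haT) H (brU a) (hUw.2 a (h3 haT))
                    (hUc a (h3 haT)) (h4 a haT)
                · injection h1 with e1 e2 e3
                  exact absurd e1 (by decide)
                · exact absurd h1 (by simp)
                · exact absurd h1 (by simp)
      | recv =>
          show Sat U ((charF (SType.choice .recv dT brT) .send).subst τ)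
          rw [charF_choice_neg (by decide : (Pol.recv : Pol) ≠ .send)]
          suffices main : ∀ c U, SType.leadMu U = c → U.wf → U.closed →
              Subtype .send (SType.choice .recv dT (fun a => (brT a).subst σ)) U →
              Sat U ((Formula.and
                (bigAnd ((dT.sort (· ≤ ·)).map
                  (fun a => Formula.box (.recv, a) (charF (brT a) .send))))
                (Formula.and
                  (bigOr ((dT.sort (· ≤ ·)).map (fun a => Formula.dia (.recv, a) .tt)))
                  (bigAnd (((allActs A).filter
                      (fun α => ¬ (α.1 = .recv ∧ α.2 ∈ dT))).map
                    (fun α => Formula.box α .ff))))).subst τ) from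
            main _ U rfl hUw hUc hsub
          intro c
          induction c using Nat.strong_induction_on with
          | _ c ihc =>
            intro U hlm hUw hUc hsub
            cases U with
            | var n => exact absurd hUc SType.closed_not_var
            | mu U₀ =>
                refine sat_mu_iff.mpr (ihc (SType.leadMu U₀.unfold) ?_ _ rfl
                  (SType.unfold_wf hUw) (SType.unfold_closed hUc) (subtype_unfold_r hsub))
                rw [SType.leadMu_unfold hUw hUc, ← hlm]
                simp [SType.leadMu]
            | end_ =>
                rcases subtype_destruct hsub with ⟨h1, h2⟩ |
                  ⟨dT', brT', dU', brU', h1, h2, h3, h4⟩ |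
                  ⟨dT', brT', dU', brU', h1, h2, h3, h4⟩ | ⟨T₀, h1, h2⟩ | ⟨U₀, h1, h2⟩
                · exact absurd h1 (by simp)
                · exact absurd h2 (by simp)
                · exact absurd h2 (by simp)
                · exact absurd h1 (by simp)
                · exact absurd h1 (by simp)
            | choice q dU brU =>
                rcases subtype_destruct hsub with ⟨h1, h2⟩ |
                  ⟨dT', brT', dU', brU', h1, h2, h3, h4⟩ |
                  ⟨dT', brT', dU', brU', h1, h2, h3, h4⟩ | ⟨T₀, h1, h2⟩ | ⟨U₀, h1, h2⟩
                · exact absurd h1 (by simp)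
                · injection h1 with e1 e2 e3
                  exact absurd e1 (by decide)
                · injection h1 with e1 e2 e3
                  subst e2; subst e3
                  injection h2 with f1 f2 f3
                  subst f1; subst f2; subst f3
                  refine Sat.and ?_ (Sat.and ?_ ?_)
                  · show Sat _ ((bigAnd _).subst τ)
                    rw [bigAnd_subst, List.map_map]
                    refine sat_bigAnd ?_
                    intro φ hφ
                    rcases List.mem_map.mp hφ with ⟨a, ha, rfl⟩
                    refine Sat.box ?_
                    intro V hs
                    rcases SType.step_choice_inv hs with ⟨hq, hmem, rfl⟩
                    exact ih a σ τ (hbrw a ((Finset.mem_sort (α := A) (· ≤ ·)).mp ha)) H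
                      (brU a) (hUw.2 a hmem) (hUc a hmem) (h4 a hmem)
                  · show Sat _ ((bigOr _).subst τ)
                    rw [bigOr_subst, List.map_map]
                    obtain ⟨a₀, ha₀⟩ := hUw.1
                    have ha₀T : a₀ ∈ dT := h3 ha₀
                    refine sat_bigOr (List.mem_map.mpr ⟨a₀,
                      (Finset.mem_sort (α := A) (· ≤ ·)).mpr ha₀T, rfl⟩) ?_
                    exact Sat.dia (Step.choice ha₀) Sat.tt
                  · show Sat _ ((bigAnd _).subst τ)
                    rw [bigAnd_subst, List.map_map]
                    refine sat_bigAnd ?_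
                    intro φ hφ
                    rcases List.mem_map.mp hφ with ⟨α, hα, rfl⟩
                    refine Sat.box ?_
                    intro V hs
                    rcases SType.step_choice_inv hs with ⟨hq, hmem, rfl⟩
                    have hor : ¬α.1 = Pol.recv ∨ α.2 ∉ dT := by
                      simpa using (List.mem_filter.mp hα).2
                    rcases hor with hcon | hcon
                    · exact absurd hq hcon
                    · exact absurd (h3 hmem) hcon
                · exact absurd h1 (by simp)
                · exact absurd h1 (by simp)

/-! #### Completeness: satisfaction of the characteristic formula implies subtyping -/

lemma sat_to_subK (T : SType A) :
    ∀ (k : ℕ) (σ : ℕ → SType A) (τ : ℕ → Formula A) (g : ℕ → Bool), T.wf →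
      (∀ i, g i = true → T.guardedVar i) →
      (∀ i U', U'.wf → U'.closed → Sat U' (τ i) →
        SubK .send (if g i then k - 1 else k) (σ i) U') →
      ∀ U, U.wf → U.closed → Sat U ((charF T .send).subst τ) →
      SubK .send k (T.subst σ) U := by
  induction T with
  | var i =>
      intro k σ τ g hTw hg H U hUw hUc hsat
      cases hgi : g i with
      | false =>
          have := H i U hUw hUc hsat
          rw [hgi] at this
          exact this
      | true => exact absurd rfl (hg i hgi)
  | end_ =>
      intro k σ τ g hTw hg H U hUw hUc hsat
      cases k with
      | zero => exact SubK.zero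
      | succ K =>
        have hφ : ((charF (SType.end_ : SType A) .send).subst τ)
            = bigAnd ((allActs A).map (fun α => .box α .ff)) := by
          simp [charF_end, bigAnd_subst, List.map_map, Function.comp_def, Formula.subst]
        rw [hφ] at hsat
        clear hφ
        suffices main : ∀ c U, SType.leadMu U = c → U.wf → U.closed →
            Sat U (bigAnd ((allActs A).map (fun α => .box α .ff))) →
            SubK .send (K + 1) (SType.end_ : SType A) U from
          main _ U rfl hUw hUc hsat
        intro c
        induction c using Nat.strong_induction_on with
        | _ c ihc =>
          intro U hlm hUw hUc hsat
          cases U with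
          | var n => exact absurd hUc SType.closed_not_var
          | mu U₀ =>
              refine SubK.recR (ihc (SType.leadMu U₀.unfold) ?_ _ rfl
                (SType.unfold_wf hUw) (SType.unfold_closed hUc) (sat_mu_iff.mp hsat))
              rw [SType.leadMu_unfold hUw hUc, ← hlm]
              simp [SType.leadMu]
          | end_ => exact SubK.end_
          | choice q dU brU =>
              obtain ⟨a₀, ha₀⟩ := hUw.1
              have hmem : (Formula.box ((q, a₀) : Act A) .ff) ∈
                  (allActs A).map (fun α => Formula.box α (.ff : Formula A)) :=
                List.mem_map.mpr ⟨(q, a₀), mem_allActs _, rfl⟩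
              have hbox := sat_bigAnd_inv hsat _ hmem
              exact absurd (sat_box_inv hbox _ (Step.choice ha₀)) (fun h => sat_ff h)
  | mu T₀ ih =>
      intro k σ τ g hTw hg H U hUw hUc hsat
      cases k with
      | zero => exact SubK.zero
      | succ K =>
        have hsat' : Sat U (.nu ((charF T₀ .send).subst (Formula.liftF τ))) := hsat
        set B := (charF T₀ .send).subst (Formula.liftF τ) with hB
        have hApp := sat_nu_inv hsat'
        have claim : ∀ m, m ≤ K + 1 → ∀ U', U'.wf → U'.closed →
            Sat U' (Formula.nuApprox B m) →
            SubK .send m ((SType.mu T₀).subst σ) U' := by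
          intro m
          induction m with
          | zero => exact fun _ U' _ _ _ => SubK.zero
          | succ m ihm =>
              intro hm U' hU'w hU'c hsatm
              refine SubK.recL ?_
              show SubK .send (m + 1) (T₀.subst (SType.liftS σ)).unfold U'
              rw [SType.unfold_subst]
              have hsatm' : Sat U' ((charF T₀ .send).subst
                  (Formula.consF (Formula.nuApprox B m) τ)) := by
                rw [← Formula.inst_subst_liftF]
                exact hsatm
              refine ih (m + 1) (SType.consS ((SType.mu T₀).subst σ) σ)
                (Formula.consF (Formula.nuApprox B m) τ)
                (fun i => match i with | 0 => true | i+1 => g i) hTw.1 ?_ ?_ U' hU'w hU'c hsatm'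
              · intro i hgi
                match i, hgi with
                | 0, _ => exact hTw.2
                | i+1, hgi => exact hg i hgi
              · intro i U'' hw hc hs
                match i with
                | 0 =>
                    exact ihm (Nat.le_of_succ_le hm) U'' hw hc hs
                | i+1 =>
                    have hH := H i U'' hw hc hs
                    show SubK .send (if g i then (m + 1) - 1 else m + 1) (σ i) U''
                    cases hgi : g i with
                    | false =>
                        rw [hgi] at hH
                        exact subK_mono (hH : SubK .send (K + 1) (σ i) U'') (m + 1) hm
                    | true =>
                        rw [hgi] at hH
                        exact subK_mono (hH : SubK .send K (σ i) U'') m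
                          (Nat.lt_succ_iff.mp hm)
        exact claim (K + 1) le_rfl U hUw hUc (hApp (K + 1))
  | choice p dT brT =>
      rename_i ih
      intro k σ τ g hTw hg H U hUw hUc hsat
      obtain ⟨hne, hbrw⟩ := hTw
      cases k with
      | zero => exact SubK.zero
      | succ K =>
        have Hk : ∀ i U', U'.wf → U'.closed → Sat U' (τ i) →
            SubK .send K (σ i) U' := by
          intro i U' hw hc hs
          have hH := H i U' hw hc hs
          cases hgi : g i with
          | false =>
              rw [hgi] at hH
              exact subK_mono (hH : SubK .send (K + 1) (σ i) U') K (Nat.le_succ K)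
          | true =>
              rw [hgi] at hH
              exact subK_mono (hH : SubK .send K (σ i) U') K le_rfl
        cases p with
        | send =>
            rw [charF_choice_pos, bigAnd_subst, List.map_map] at hsat
            suffices main : ∀ c U, SType.leadMu U = c → U.wf → U.closed →
                Sat U (bigAnd ((dT.sort (· ≤ ·)).map
                  ((fun (φ : Formula A) => φ.subst τ) ∘
                    fun a => .dia (.send, a) (charF (brT a) .send)))) →
                SubK .send (K + 1) (SType.choice .send dT (fun a => (brT a).subst σ)) U from
              main _ U rfl hUw hUc hsat
            intro c
            induction c using Nat.strong_induction_on with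
            | _ c ihc =>
              intro U hlm hUw hUc hsat
              have hdia : ∀ a ∈ dT, ∃ V, Step U (.send, a) V ∧
                  Sat V ((charF (brT a) .send).subst τ) := by
                intro a ha
                have hmem : ((fun (φ : Formula A) => φ.subst τ) ∘
                    fun a => Formula.dia ((Pol.send, a) : Act A) (charF (brT a) .send)) a ∈
                    (dT.sort (· ≤ ·)).map ((fun (φ : Formula A) => φ.subst τ) ∘
                      fun a => Formula.dia ((Pol.send, a) : Act A) (charF (brT a) .send)) :=
                  List.mem_map.mpr ⟨a, (Finset.mem_sort (α := A) (· ≤ ·)).mpr ha, rfl⟩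
                exact sat_dia_inv (sat_bigAnd_inv hsat _ hmem)
              cases U with
              | var n => exact absurd hUc SType.closed_not_var
              | mu U₀ =>
                  refine SubK.recR (ihc (SType.leadMu U₀.unfold) ?_ _ rfl
                    (SType.unfold_wf hUw) (SType.unfold_closed hUc) (sat_mu_iff.mp hsat))
                  rw [SType.leadMu_unfold hUw hUc, ← hlm]
                  simp [SType.leadMu]
              | end_ =>
                  obtain ⟨a₀, ha₀⟩ := hne
                  obtain ⟨V, hs, _⟩ := hdia a₀ ha₀
                  exact absurd hs SType.step_end
              | choice q dU brU =>
                  obtain ⟨a₀, ha₀⟩ := hne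
                  obtain ⟨V₀, hs₀, _⟩ := hdia a₀ ha₀
                  obtain ⟨hq, _, _⟩ := SType.step_choice_inv hs₀
                  cases hq
                  have hsub : dT ⊆ dU := by
                    intro a ha
                    obtain ⟨V, hs, _⟩ := hdia a ha
                    exact (SType.step_choice_inv hs).2.1
                  refine SubK.ch hsub ?_
                  intro a ha
                  obtain ⟨V, hs, hsV⟩ := hdia a ha
                  obtain ⟨_, hmem, rfl⟩ := SType.step_choice_inv hs
                  exact ih a K σ τ (fun _ => false) (hbrw a ha) (by simp) 
                    (fun i U' hw hc hsx => by simpa using Hk i U' hw hc hsx)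
                    (brU a) (hUw.2 _ hmem) (hUc _ hmem) hsV
        | recv =>
            rw [charF_choice_neg (by decide : (Pol.recv : Pol) ≠ .send)] at hsat
            suffices main : ∀ c U, SType.leadMu U = c → U.wf → U.closed →
                Sat U ((Formula.and
                  (bigAnd ((dT.sort (· ≤ ·)).map
                    (fun a => Formula.box (.recv, a) (charF (brT a) .send))))
                  (Formula.and
                    (bigOr ((dT.sort (· ≤ ·)).map (fun a => Formula.dia (.recv, a) .tt)))
                    (bigAnd (((allActs A).filter
                        (fun α => ¬ (α.1 = .recv ∧ α.2 ∈ dT))).map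
                      (fun α => Formula.box α .ff))))).subst τ) →
                SubK .send (K + 1) (SType.choice .recv dT (fun a => (brT a).subst σ)) U from
              main _ U rfl hUw hUc hsat
            intro c
            induction c using Nat.strong_induction_on with
            | _ c ihc =>
              intro U hlm hUw hUc hsat
              obtain ⟨h1, h23⟩ := sat_and_inv hsat
              obtain ⟨h2, h3⟩ := sat_and_inv h23
              rw [show (bigAnd ((dT.sort (· ≤ ·)).map
                    (fun a => Formula.box (.recv, a) (charF (brT a) .send)))).subst τ
                  = bigAnd ((dT.sort (· ≤ ·)).map
                    ((fun (φ : Formula A) => φ.subst τ) ∘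
                      fun a => Formula.box (.recv, a) (charF (brT a) .send))) from by
                rw [bigAnd_subst, List.map_map]] at h1
              rw [bigOr_subst, List.map_map] at h2
              rw [bigAnd_subst, List.map_map] at h3
              cases U with
              | var n => exact absurd hUc SType.closed_not_var
              | mu U₀ =>
                  refine SubK.recR (ihc (SType.leadMu U₀.unfold) ?_ _ rfl
                    (SType.unfold_wf hUw) (SType.unfold_closed hUc) (sat_mu_iff.mp hsat))
                  rw [SType.leadMu_unfold hUw hUc, ← hlm]
                  simp [SType.leadMu]
              | end_ =>
                  obtain ⟨φ, hφ, hsφ⟩ := sat_bigOr_inv h2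
                  obtain ⟨a, ha, rfl⟩ := List.mem_map.mp hφ
                  obtain ⟨V, hs, _⟩ := sat_dia_inv hsφ
                  exact absurd hs SType.step_end
              | choice q dU brU =>
                  obtain ⟨a₀, ha₀⟩ := hUw.1
                  cases q with
                  | send =>
                      have hfil : ((Pol.send, a₀) : Act A) ∈ (allActs A).filter
                          (fun α => ¬ (α.1 = .recv ∧ α.2 ∈ dT)) :=
                        List.mem_filter.mpr ⟨mem_allActs _, by simp⟩
                      have hmem : (Formula.box ((Pol.send, a₀) : Act A) (.ff : Formula A)).subst τ ∈
                          ((allActs A).filter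
                            (fun α => ¬ (α.1 = .recv ∧ α.2 ∈ dT))).map
                          ((fun (φ : Formula A) => φ.subst τ) ∘
                            fun α => Formula.box α (.ff : Formula A)) :=
                        List.mem_map.mpr ⟨(Pol.send, a₀), hfil, rfl⟩
                      have hbox := sat_bigAnd_inv h3 _ hmem
                      exact absurd (sat_box_inv hbox _ (Step.choice ha₀))
                        (fun h => sat_ff h)
                  | recv =>
                      have hsub : dU ⊆ dT := by
                        intro a ha
                        by_contra hna
                        have hfil : ((Pol.recv, a) : Act A) ∈ (allActs A).filter
                            (fun α => ¬ (α.1 = .recv ∧ α.2 ∈ dT)) :=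
                          List.mem_filter.mpr ⟨mem_allActs _, by simp [hna]⟩
                        have hmem : (Formula.box ((Pol.recv, a) : Act A) (.ff : Formula A)).subst τ ∈
                            ((allActs A).filter
                              (fun α => ¬ (α.1 = .recv ∧ α.2 ∈ dT))).map
                            ((fun (φ : Formula A) => φ.subst τ) ∘
                              fun α => Formula.box α (.ff : Formula A)) :=
                          List.mem_map.mpr ⟨(Pol.recv, a), hfil, rfl⟩
                        have hbox := sat_bigAnd_inv h3 _ hmem
                        exact absurd (sat_box_inv hbox _ (Step.choice ha)) (fun h => sat_ff h)
                      refine SubK.coch hsub ?_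
                      intro a ha
                      have haT : a ∈ dT := hsub ha
                      have hmem : (Formula.box ((Pol.recv, a) : Act A)
                          (charF (brT a) .send)).subst τ ∈
                          (dT.sort (· ≤ ·)).map
                            ((fun (φ : Formula A) => φ.subst τ) ∘
                              fun a => Formula.box (.recv, a) (charF (brT a) .send)) :=
                        List.mem_map.mpr ⟨a, (Finset.mem_sort (α := A) (· ≤ ·)).mpr haT, rfl⟩
                      have hbox := sat_bigAnd_inv h1 _ hmem
                      have hsV := sat_box_inv hbox _ (Step.choice ha)
                      exact ih a K σ τ (fun _ => false) (hbrw a haT) (by simp)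
                        (fun i U' hw hc hsx => by simpa using Hk i U' hw hc hsx)
                        (brU a) (hUw.2 _ ha) (hUc _ ha) hsV

end Main

end Dev
end SessionCF


/-- For all closed session types `T`, `U`:
`T ≼ U` iff `U ⊨ F(T, ⊕)`, where `≼` is `≤_⊕`. -/
theorem sub_iff_sat_charF_send {A : Type} [Fintype A] [LinearOrder A]
    (T U : SessionCF.SType A)
    (hTwf : T.wf) (hTcl : T.closed) (hUwf : U.wf) (hUcl : U.closed) :
    SessionCF.Subtype .send T U ↔
      SessionCF.Sat U (SessionCF.charF T .send) := by
  constructor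
  · intro hsub
    have h := SessionCF.sub_to_sat T .var .var hTwf
      (fun i U' hw hc hs => (SessionCF.subtype_var_false hw hc hs).elim)
      U hUwf hUcl (by rw [SessionCF.SType.subst_var]; exact hsub)
    rw [SessionCF.Formula.subst_var] at h
    exact h
  · intro hsat
    refine SessionCF.subtype_of_subK hTwf hTcl hUwf hUcl (fun k => ?_)
    have h := SessionCF.sat_to_subK T k .var .var (fun _ => false) hTwf
      (fun i hi => nomatch hi)
      (fun i U' hw hc hs => (SessionCF.sat_var hs).elim)
      U hUwf hUcl (by rw [SessionCF.Formula.subst_var]; exact hsat)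
    rw [SessionCF.SType.subst_var] at h
    exact h
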